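/- Let p, u, v, g, z, h, r be real numbers. Define F : ℝ³ → Matrix 3 3 ℝ by F(y) = [[p, u, v − u·y₁ + p·y₂], [−u, p, g − p·y₁ − u·y₂], [z + u·y₁ + p·y₂, h − p·y₁ + u·y₂, r − (g+h)·y₁ + (v+z)·y₂ + p·(y₁² + y₂²)]], let B(y) = (F(y) − F(y)ᵀ)/2 be its antisymmetric part, and define the torsion H_{ijk}(y) = ∂_{y_i}B_{jk}(y) + ∂_{y_j}B_{ki}(y) + ∂_{y_k}B_{ij}(y). Then H_{ijk}(y) = 0 for all indices i,j,k ∈ {1,2,3} and all y ∈ ℝ³, i.e. the sigma model on the Manin triple (7₀|1) is torsionless. -/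
import Mathlib


open Matrix

/-- The torsion potential of a sigma model tensor `F`: its antisymmetric part. -/
noncomputable def Bpot (F : (Fin 3 → ℝ) → Matrix (Fin 3) (Fin 3) ℝ)
    (y : Fin 3 → ℝ) : Matrix (Fin 3) (Fin 3) ℝ :=
  (1 / 2 : ℝ) • (F y - (F y)ᵀ)

/-- The torsion `H_{ijk} = ∂ᵢ B_{jk} + ∂ⱼ B_{ki} + ∂ₖ B_{ij}` of a sigma model
tensor `F`, where `∂ᵢ` is the partial derivative in the `i`-th coordinate. -/
noncomputable def torsionH (F : (Fin 3 → ℝ) → Matrix (Fin 3) (Fin 3) ℝ)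
    (y : Fin 3 → ℝ) (i j k : Fin 3) : ℝ :=
  deriv (fun t => Bpot F (Function.update y i t) j k) (y i) +
  deriv (fun t => Bpot F (Function.update y j t) k i) (y j) +
  deriv (fun t => Bpot F (Function.update y k t) i j) (y k)

/-- The tensor `F` of the sigma model on the Manin triple `(7₀|1)`. -/
noncomputable def F701 (p u v g z h r : ℝ) (y : Fin 3 → ℝ) : Matrix (Fin 3) (Fin 3) ℝ :=
  !![p,                     u,                     v - u * y 0 + p * y 1;
     -u,                    p,                     g - p * y 0 - u * y 1;
     z + u * y 0 + p * y 1, h - p * y 0 + u * y 1,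
       r - (g + h) * y 0 + (v + z) * y 1 + p * ((y 0) ^ 2 + (y 1) ^ 2)]

/-- The torsion potential of `F701`, computed explicitly. -/
lemma Bpot701 (p u v g z h r : ℝ) (y : Fin 3 → ℝ) :
    Bpot (F701 p u v g z h r) y =
    !![0, u, (v - z) / 2 - u * y 0;
       -u, 0, (g - h) / 2 - u * y 1;
       -((v - z) / 2 - u * y 0), -((g - h) / 2 - u * y 1), 0] := by
  ext i j
  simp only [Bpot, Matrix.smul_apply, Matrix.sub_apply, Matrix.transpose_apply, smul_eq_mul]
  fin_cases i <;> fin_cases j <;> simp [F701] <;> ring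

lemma deriv_const_sub_mul (c a x : ℝ) : deriv (fun t => c - a * t) x = -a := by
  simpa using (((hasDerivAt_id x).const_mul a).const_sub c).deriv

lemma deriv_mul_sub_const (a c x : ℝ) : deriv (fun t => a * t - c) x = a := by
  simpa using (((hasDerivAt_id x).const_mul a).sub_const c).deriv

lemma deriv_neg_const_sub_mul (c a x : ℝ) : deriv (fun t => -(c - a * t)) x = a := by
  simpa using ((((hasDerivAt_id x).const_mul a).const_sub c).neg).deriv

/-- The sigma model on the Manin triple `(7₀|1)` is torsionless. -/
theorem torsion701_eq_zero (p u v g z h r : ℝ) :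
    ∀ (y : Fin 3 → ℝ) (i j k : Fin 3), torsionH (F701 p u v g z h r) y i j k = 0 := by
  intro y i j k
  fin_cases i <;> fin_cases j <;> fin_cases k <;>
    simp [torsionH, Bpot701, Function.update, deriv_const_sub_mul,
      deriv_neg_const_sub_mul, deriv_mul_sub_const]
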